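/- arXiv:1307.1188 — 12 statements merged into one kernel-verified Lean document; each statement's English description precedes it below -/
import Mathlib

section
/- For every integer base q ≥ 2 and every natural number n ≥ q (i.e., whenever the base-q expansion of n has at least two digits), the Sloane map satisfies S_q(n) < n. -/
/-- The Sloane map in base `q`: the product of the base-`q` digits of `n`
(with `S_q(0) = 0`). -/
def sloane (q n : ℕ) : ℕ := if n = 0 then 0 else (Nat.digits q n).prod

lemma prod_digits_le (q : ℕ) (hq : 2 ≤ q) : ∀ n, 0 < n → (Nat.digits q n).prod ≤ n := by
  intro n
  induction n using Nat.strong_induction_on with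
  | _ n ih =>
    intro hn
    rw [Nat.digits_def' (by omega : 1 < q) hn, List.prod_cons]
    rcases Nat.lt_or_ge n q with h | h
    · rw [Nat.mod_eq_of_lt h, Nat.div_eq_of_lt h]
      simp
    · have hd : 0 < n / q := Nat.div_pos h (by omega)
      have hlt : n / q < n := Nat.div_lt_self (by omega) (by omega)
      have := ih (n / q) hlt hd
      calc n % q * (Nat.digits q (n / q)).prod ≤ (q - 1) * (n / q) :=
            Nat.mul_le_mul (by have := Nat.mod_lt n (show 0 < q by omega); omega) this
        _ ≤ q * (n / q) := Nat.mul_le_mul_right _ (by omega)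
        _ ≤ n := Nat.mul_div_le n q

/-- For every base `q ≥ 2` and every `n ≥ q` (i.e. whenever `n` has at least
two digits in base `q`), the Sloane map satisfies `S_q(n) < n`. -/
theorem sloane_lt (q n : ℕ) (hq : 2 ≤ q) (hn : q ≤ n) : sloane q n < n := by
  have hn0 : n ≠ 0 := by omega
  rw [sloane, if_neg hn0]
  rw [Nat.digits_def' (by omega : 1 < q) (by omega), List.prod_cons]
  have hd : 0 < n / q := Nat.div_pos hn (by omega)
  have hp := prod_digits_le q hq (n / q) hd
  calc n % q * (Nat.digits q (n / q)).prod ≤ (q - 1) * (n / q) :=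
        Nat.mul_le_mul (by have := Nat.mod_lt n (show 0 < q by omega); omega) hp
    _ < q * (n / q) := by
        exact (Nat.mul_lt_mul_right hd).mpr (by omega)
    _ ≤ n := Nat.mul_div_le n q
end

section
/- If n > 3, then at least one of the digits in the base-3 expansion of 2^n is not equal to 2; equivalently, there is no k with 2^n = 3^k − 1 when n > 3. -/
lemma ofDigits_replicate_two (k : ℕ) :
    Nat.ofDigits 3 (List.replicate k 2) + 1 = 3 ^ k := by
  induction k with
  | zero => simp [Nat.ofDigits]
  | succ k ih =>
    rw [List.replicate_succ, Nat.ofDigits_cons, pow_succ]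
    push_cast at ih ⊢
    omega

lemma no_pow_three (n : ℕ) (hn : 3 < n) : ¬ ∃ k : ℕ, 2 ^ n + 1 = 3 ^ k := by
  rintro ⟨k, hk⟩
  -- 2^n ≡ 0 mod 16
  have h16 : 2 ^ n % 16 = 0 := by
    have : (2:ℕ)^4 ∣ 2^n := pow_dvd_pow 2 (by omega)
    omega
  have hmod : 3 ^ k % 16 = 1 := by omega
  -- write k = 4*q + r
  have hk4 : k % 4 = 0 := by
    have h : 3 ^ k % 16 = 3 ^ (k % 4) % 16 := by
      conv_lhs => rw [← Nat.div_add_mod k 4]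
      rw [pow_add, pow_mul, Nat.mul_mod, Nat.pow_mod]
      norm_num
    rw [h] at hmod
    have hr : k % 4 < 4 := Nat.mod_lt _ (by norm_num)
    interval_cases h : k % 4 <;> simp_all
  -- then 3^k ≡ 1 mod 5
  have h5 : 3 ^ k % 5 = 1 := by
    conv_lhs => rw [← Nat.div_add_mod k 4, hk4]
    rw [Nat.add_zero, pow_mul, Nat.pow_mod]
    norm_num
  have h2 : 2 ^ n % 5 = 0 := by omega
  have : (5:ℕ) ∣ 2 ^ n := Nat.dvd_of_mod_eq_zero h2
  have := (by norm_num : Nat.Prime 5).dvd_of_dvd_pow this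
  omega

/-- If `n > 3`, then at least one digit of the base-3 expansion of `2^n` is not
equal to `2`; equivalently, there is no `k` with `2^n = 3^k - 1`. -/
theorem exists_digit_ne_two_of_pow_two (n : ℕ) (hn : 3 < n) :
    (∃ d ∈ Nat.digits 3 (2 ^ n), d ≠ 2) ∧ ¬ ∃ k : ℕ, 2 ^ n + 1 = 3 ^ k := by
  refine ⟨?_, no_pow_three n hn⟩
  by_contra h
  push_neg at h
  have hrep : Nat.digits 3 (2 ^ n) =
      List.replicate (Nat.digits 3 (2 ^ n)).length 2 :=
    List.eq_replicate_of_mem h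
  have h1 := Nat.ofDigits_digits 3 (2 ^ n)
  rw [hrep] at h1
  have h2 := ofDigits_replicate_two (Nat.digits 3 (2 ^ n)).length
  exact no_pow_three n hn ⟨(Nat.digits 3 (2 ^ n)).length, by omega⟩
end

section
/- For every n > 3, if k denotes the number of digits in the base-3 expansion of 2^n, then S_3(2^n) ≤ 2^{k−1}. -/
lemma no_catalan (n k : ℕ) (hn : 4 ≤ n) (h : 2 ^ n + 1 = 3 ^ k) : False := by
  obtain ⟨c, hc⟩ : 2 ^ 4 ∣ 2 ^ n := pow_dvd_pow 2 hn
  have h16 : 3 ^ k % 16 = 1 := by omega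
  have hper : 3 ^ k % 16 = 3 ^ (k % 4) % 16 := by
    conv_lhs => rw [← Nat.div_add_mod k 4]
    rw [pow_add, pow_mul, Nat.mul_mod, Nat.pow_mod]
    norm_num
  have hk4 : k % 4 = 0 := by
    have h4 : k % 4 < 4 := Nat.mod_lt _ (by norm_num)
    interval_cases h : k % 4 <;> simp_all
  have hdvd : 4 ∣ k := Nat.dvd_of_mod_eq_zero hk4
  obtain ⟨m, hm⟩ := hdvd
  have h5 : 3 ^ k % 5 = 1 := by
    rw [hm, pow_mul, Nat.pow_mod]
    norm_num
  have h5d : 5 ∣ 2 ^ n := by omega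
  have := Nat.Prime.dvd_of_dvd_pow (p := 5) (by norm_num) h5d
  omega

/-- For every `n > 3`, if `k` is the number of digits of the base-3 expansion of
`2^n`, then `S_3(2^n) ≤ 2^(k-1)`. -/
theorem sloane_pow_two_le (n : ℕ) (hn : 3 < n) :
    sloane 3 (2 ^ n) ≤ 2 ^ ((Nat.digits 3 (2 ^ n)).length - 1) := by
  have hne : 2 ^ n ≠ 0 := by positivity
  set L := Nat.digits 3 (2 ^ n) with hL
  have hlt : ∀ d ∈ L, d < 3 := fun d hd => Nat.digits_lt_base (by norm_num) hd
  have hsl : sloane 3 (2 ^ n) = L.prod := by rw [sloane, if_neg hne]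
  by_cases hall : ∀ d ∈ L, d = 2
  · exfalso
    have hrep : L = List.replicate L.length 2 := List.eq_replicate_of_mem hall
    have h2n : 2 ^ n = Nat.ofDigits 3 L := (Nat.ofDigits_digits 3 (2 ^ n)).symm
    refine no_catalan n L.length hn ?_
    rw [h2n]
    conv_lhs => rw [hrep]
    exact ofDigits_replicate_two L.length
  · push_neg at hall
    obtain ⟨d, hdL, hd2⟩ := hall
    have hd1 : d ≤ 1 := by have := hlt d hdL; omega
    have hperm : L.prod = d * (L.erase d).prod := by
      rw [(List.perm_cons_erase hdL).prod_eq, List.prod_cons]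
    have hle : (L.erase d).prod ≤ 2 ^ (L.erase d).length :=
      List.prod_le_pow_card _ _ (fun x hx => by
        have := hlt x (List.mem_of_mem_erase hx); omega)
    have hlen : (L.erase d).length = L.length - 1 := List.length_erase_of_mem hdL
    rw [hsl, hperm]
    calc d * (L.erase d).prod ≤ 1 * 2 ^ (L.erase d).length :=
          Nat.mul_le_mul hd1 hle
      _ = 2 ^ (L.length - 1) := by rw [one_mul, hlen]
end

section
/- The set A = {n ∈ ℕ : the base-3 expansion of 2^n contains at least one digit equal to 0} has asymptotic density 1; that is, (1/N)·#{0 ≤ n < N : the base-3 expansion of 2^n contains the digit 0} → 1 as N → ∞. Equivalently, the set {n : S_3(2^n) = 0} has asymptotic density 1. -/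
/-!
The residue of `2 ^ n` modulo `3 ^ (k + 1)` depends only on `n` modulo the order `2 * 3 ^ k`
of `2`, and distinct `n` in one period give distinct residues. Once `2 ^ n ≥ 3 ^ (k + 1)`, a
zero-free `2 ^ n` has a residue whose `k + 1` lowest digits are nonzero, and there are only
`2 ^ (k + 1)` such residues. Hence the upper density of the exceptional `n` is at most
`2 ^ (k + 1) / (2 * 3 ^ k) = (2 / 3) ^ k` for every `k`.
-/

open Filter

open Finset Topology

theorem sloane_eq_zero_iff {q n : ℕ} (hn : n ≠ 0) : sloane q n = 0 ↔ 0 ∈ q.digits n := by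
  rw [sloane, if_neg hn, List.prod_eq_zero_iff]

theorem tendsto_div_nhds_zero_of_le_add_mul {u : ℕ → ℝ} (hu : ∀ N, 0 ≤ u N)
    (h : ∀ ε > 0, ∃ C, ∀ N, u N ≤ C + ε * N) : Tendsto (fun N => u N / N) atTop (𝓝 0) := by
  refine Asymptotics.IsLittleO.tendsto_div_nhds_zero (Asymptotics.isLittleO_iff.2 fun c hc => ?_)
  obtain ⟨C, hC⟩ := h (c / 2) (half_pos hc)
  filter_upwards [tendsto_natCast_atTop_atTop.eventually_ge_atTop (2 * C / c)] with N hN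
  rw [Real.norm_of_nonneg (hu N), Real.norm_natCast]
  linarith [hC N, (div_le_iff₀ hc).1 hN]

theorem tendsto_card_filter_div_one_of_not (p : ℕ → Prop) [DecidablePred p]
    (h : Tendsto (fun N => (#{n ∈ range N | ¬ p n} : ℝ) / N) atTop (𝓝 0)) :
    Tendsto (fun N => (#{n ∈ range N | p n} : ℝ) / N) atTop (𝓝 1) := by
  have hcompl : Tendsto (fun N => 1 - (#{n ∈ range N | ¬ p n} : ℝ) / N) atTop (𝓝 1) := by
    simpa using tendsto_const_nhds.sub h
  refine hcompl.congr' ?_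
  filter_upwards [eventually_gt_atTop 0] with N hN
  have hsum : (#{n ∈ range N | p n} : ℝ) + #{n ∈ range N | ¬ p n} = N := by
    exact_mod_cast (card_filter_add_card_filter_not p).trans (card_range N)
  field_simp
  linarith

theorem card_filter_range_le_of_modEq {α : Type*} [DecidableEq α] (f : ℕ → α) {T : ℕ}
    (hf : ∀ n m, f n = f m → n ≡ m [MOD T]) (S : Finset α) (N : ℕ) :
    #{n ∈ range N | f n ∈ S} ≤ (N / T + 1) * #S := by
  calc #{n ∈ range N | f n ∈ S} ≤ #(range (N / T + 1) ×ˢ S) := by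
        refine card_le_card_of_injOn (fun n => (n / T, f n)) ?_ ?_
        · intro n hn
          simp only [coe_filter, mem_range, Set.mem_ofPred_eq] at hn
          simp only [coe_product, coe_range, Set.mem_prod, Set.mem_Iio, mem_coe]
          exact ⟨Nat.lt_succ_of_le (Nat.div_le_div_right hn.1.le), hn.2⟩
        · intro n _ m _ h
          simp only [Prod.mk.injEq] at h
          rw [← Nat.div_add_mod n T, ← Nat.div_add_mod m T, h.1, hf n m h.2]
    _ = (N / T + 1) * #S := by rw [card_product, card_range]

theorem Nat.modEq_of_pow_mod_eq_pow_mod {a M n m : ℕ} (ha : 0 < orderOf (a : ZMod M))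
    (h : a ^ n % M = a ^ m % M) : n ≡ m [MOD orderOf (a : ZMod M)] := by
  rw [← ZMod.natCast_eq_natCast_iff', Nat.cast_pow, Nat.cast_pow] at h
  exact (orderOf_pos_iff.1 ha).pow_eq_pow_iff_modEq.1 h

theorem Nat.div_pow_mod_ne_zero_of_zero_notMem_digits {b m i : ℕ} (hb : 1 < b)
    (h0 : 0 ∉ b.digits m) (hi : b ^ i ≤ m) : m / b ^ i % b ≠ 0 := by
  have hlen := (Nat.lt_digits_length_iff hb m).2 hi
  rw [← Nat.getD_digits m i hb, List.getD_eq_getElem _ _ hlen]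
  exact fun h => h0 (h ▸ List.getElem_mem hlen)

theorem Nat.mod_pow_div_pow_mod {b m i K : ℕ} (hi : i < K) :
    m % b ^ K / b ^ i % b = m / b ^ i % b := by
  rw [← Nat.mod_mul_right_div_self, ← Nat.mod_mul_right_div_self, Nat.mod_mod_of_dvd]
  exact pow_succ b i ▸ pow_dvd_pow b hi

def zeroFreeResidues (b K : ℕ) : Finset ℕ :=
  {r ∈ range (b ^ K) | ∀ i < K, r / b ^ i % b ≠ 0}

theorem card_zeroFreeResidues_le (b K : ℕ) : #(zeroFreeResidues b K) ≤ (b - 1) ^ K := by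
  induction K with
  | zero => simp [zeroFreeResidues]
  | succ K ih =>
    calc #(zeroFreeResidues b (K + 1))
        ≤ #(Ioo 0 b ×ˢ zeroFreeResidues b K) := by
          refine card_le_card_of_injOn (fun r => (r % b, r / b)) ?_ ?_
          · intro r hr
            simp only [zeroFreeResidues, coe_filter, mem_range, Set.mem_ofPred_eq] at hr
            have hb : 0 < b := Nat.pos_of_ne_zero fun hb => by simp [hb] at hr
            simp only [zeroFreeResidues, coe_product, coe_Ioo, coe_filter, mem_range, Set.mem_prod,
              Set.mem_Ioo, Set.mem_ofPred_eq]
            refine ⟨⟨Nat.pos_of_ne_zero (by simpa using hr.2 0 K.succ_pos), Nat.mod_lt r hb⟩,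
              Nat.div_lt_of_lt_mul (by rw [← pow_succ']; exact hr.1), fun i hi => ?_⟩
            rw [Nat.div_div_eq_div_mul, ← pow_succ']
            exact hr.2 (i + 1) (by omega)
          · intro r _ s _ h
            simp only [Prod.mk.injEq] at h
            rw [← Nat.mod_add_div r b, ← Nat.mod_add_div s b, h.1, h.2]
      _ ≤ (b - 1) ^ (K + 1) := by
          rw [card_product, Nat.card_Ioo, Nat.sub_zero, pow_succ']
          exact Nat.mul_le_mul_left _ ih

theorem mod_pow_mem_zeroFreeResidues {b m K : ℕ} (hb : 1 < b) (h0 : 0 ∉ b.digits m)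
    (hK : b ^ K ≤ m) : m % b ^ K ∈ zeroFreeResidues b K := by
  refine mem_filter.2 ⟨mem_range.2 (Nat.mod_lt _ (by positivity)), fun i hi => ?_⟩
  rw [Nat.mod_pow_div_pow_mod hi]
  exact Nat.div_pow_mod_ne_zero_of_zero_notMem_digits hb h0
    ((Nat.pow_le_pow_right hb.le hi.le).trans hK)

theorem orderOf_two_zmod_three_pow (k : ℕ) : orderOf (2 : ZMod (3 ^ (k + 1))) = 2 * 3 ^ k := by
  have : Fact (1 < 3 ^ (k + 1)) := ⟨Nat.one_lt_pow k.succ_ne_zero (by norm_num)⟩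
  set u : ZMod (3 ^ (k + 1)) := 1 + (3 : ℕ) * ((-1 : ℤ) : ZMod (3 ^ (k + 1)))
  have hneg : orderOf (-1 : ZMod (3 ^ (k + 1))) = 2 := by
    rw [orderOf_neg_one, ZMod.ringChar_zmod_n, if_neg]
    exact (Nat.lt_of_lt_of_le (by norm_num) (Nat.le_self_pow k.succ_ne_zero 3)).ne'
  have hu : orderOf u = 3 ^ k :=
    ZMod.orderOf_one_add_mul_prime Nat.prime_three (by norm_num) (-1) (by norm_num) k
  have hcop : (orderOf (-1 : ZMod (3 ^ (k + 1)))).Coprime (orderOf u) := by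
    rw [hneg, hu]
    exact Nat.Coprime.pow_right k (by norm_num)
  have h2 : (2 : ZMod (3 ^ (k + 1))) = -1 * u := by
    simp only [u]; push_cast; ring
  rw [h2, (Commute.all _ _).orderOf_mul_eq_mul_orderOf_of_coprime hcop, hneg, hu]

theorem card_filter_zero_notMem_digits_two_pow_le (k N : ℕ) :
    #{n ∈ range N | 0 ∉ Nat.digits 3 (2 ^ n)} ≤
      2 * (k + 1) + (N / (2 * 3 ^ k) + 1) * 2 ^ (k + 1) := by
  set R := zeroFreeResidues 3 (k + 1)
  have hsub : {n ∈ range N | 0 ∉ Nat.digits 3 (2 ^ n)} ⊆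
      range (2 * (k + 1)) ∪ {n ∈ range N | 2 ^ n % 3 ^ (k + 1) ∈ R} := by
    intro n hn
    rw [mem_filter] at hn
    rw [mem_union, mem_range, mem_filter]
    refine (lt_or_ge n (2 * (k + 1))).imp id fun hn2 => ⟨hn.1, ?_⟩
    refine mod_pow_mem_zeroFreeResidues (by norm_num) hn.2 ?_
    calc 3 ^ (k + 1) ≤ 4 ^ (k + 1) := Nat.pow_le_pow_left (by norm_num) _
      _ = 2 ^ (2 * (k + 1)) := by rw [pow_mul]; norm_num
      _ ≤ 2 ^ n := Nat.pow_le_pow_right (by norm_num) hn2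
  have hper : ∀ n m, 2 ^ n % 3 ^ (k + 1) = 2 ^ m % 3 ^ (k + 1) → n ≡ m [MOD 2 * 3 ^ k] := by
    intro n m h
    have hord : orderOf ((2 : ℕ) : ZMod (3 ^ (k + 1))) = 2 * 3 ^ k := by
      rw [Nat.cast_ofNat, orderOf_two_zmod_three_pow]
    exact hord ▸ Nat.modEq_of_pow_mod_eq_pow_mod (hord ▸ by positivity) h
  calc #{n ∈ range N | 0 ∉ Nat.digits 3 (2 ^ n)}
      ≤ #(range (2 * (k + 1))) + #{n ∈ range N | 2 ^ n % 3 ^ (k + 1) ∈ R} :=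
        (card_le_card hsub).trans (card_union_le _ _)
    _ ≤ 2 * (k + 1) + (N / (2 * 3 ^ k) + 1) * 2 ^ (k + 1) := by
        rw [card_range]
        gcongr
        refine (card_filter_range_le_of_modEq _ hper _ N).trans ?_
        gcongr
        exact card_zeroFreeResidues_le 3 (k + 1)

theorem tendsto_card_filter_zero_notMem_digits_two_pow_div :
    Tendsto (fun N => (#{n ∈ range N | 0 ∉ Nat.digits 3 (2 ^ n)} : ℝ) / N) atTop (𝓝 0) := by
  refine tendsto_div_nhds_zero_of_le_add_mul (fun N => by positivity) fun ε hε => ?_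
  obtain ⟨k, hk⟩ : ∃ k : ℕ, (2 / 3 : ℝ) ^ k < ε :=
    exists_pow_lt_of_lt_one hε (by norm_num)
  refine ⟨2 * (k + 1) + 2 ^ (k + 1), fun N => ?_⟩
  have hdiv : ((N / (2 * 3 ^ k) : ℕ) : ℝ) ≤ N / (2 * 3 ^ k) := by
    exact_mod_cast Nat.cast_div_le
  calc (#{n ∈ range N | 0 ∉ Nat.digits 3 (2 ^ n)} : ℝ)
      ≤ 2 * (k + 1) + (((N / (2 * 3 ^ k) : ℕ) : ℝ) + 1) * 2 ^ (k + 1) := by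
        exact_mod_cast card_filter_zero_notMem_digits_two_pow_le k N
    _ ≤ 2 * (k + 1) + (N / (2 * 3 ^ k) + 1) * 2 ^ (k + 1) := by gcongr
    _ = 2 * (k + 1) + 2 ^ (k + 1) + (2 / 3) ^ k * N := by rw [div_pow]; field_simp; ring
    _ ≤ 2 * (k + 1) + 2 ^ (k + 1) + ε * N := by gcongr

/-- The set of `n` such that the base-3 expansion of `2^n` contains a digit `0`
has asymptotic density `1`; equivalently, `{n : S_3(2^n) = 0}` has density `1`. -/
theorem density_zero_digit_pow_two_base_three :
    Tendsto (fun N : ℕ =>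
        (((Finset.range N).filter fun n => 0 ∈ Nat.digits 3 (2 ^ n)).card : ℝ) / N)
      atTop (nhds 1) ∧
    Tendsto (fun N : ℕ =>
        (((Finset.range N).filter fun n => sloane 3 (2 ^ n) = 0).card : ℝ) / N)
      atTop (nhds 1) := by
  have hzero := tendsto_card_filter_div_one_of_not _
    tendsto_card_filter_zero_notMem_digits_two_pow_div
  refine ⟨hzero, ?_⟩
  simpa only [sloane_eq_zero_iff (pow_ne_zero _ two_ne_zero)] using hzero
end

section
/- Let 1 < p < q be integers and set α = log p / log q. Then for every n ≥ 0, the n-th iterate of T_{p,q} at the point 1/q satisfies T_{p,q}^n(1/q) = q^{{nα} − 1}, where {·} denotes fractional part. In particular, if nα ∉ ℤ (for example, if n ≥ 1 and α is irrational), then T_{p,q}^n(1/q) = p^n / q^{⌈nα⌉}, and ⌈nα⌉ equals the number of digits of p^n in base q. -/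
/-- The piecewise affine circle map `T_{p,q} : [1/q, 1] → [1/q, 1]`, given by
`x ↦ p·x` on `[1/q, 1/p)` and `x ↦ (p/q)·x` on `[1/p, 1]`. -/
noncomputable def Tmap (p q : ℕ) (x : ℝ) : ℝ :=
  if x < 1 / (p : ℝ) then (p : ℝ) * x else (p : ℝ) / (q : ℝ) * x

/-- For integers `1 < p < q` and `α = log p / log q`, the `n`-th iterate of
`T_{p,q}` at `1/q` equals `q^({nα} - 1)`.  In particular, if `nα ∉ ℤ`, then
`T_{p,q}^n(1/q) = p^n / q^⌈nα⌉`, and `⌈nα⌉` is the number of digits of `p^n`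
in base `q`. -/
theorem Tmap_iterate_one_div (p q : ℕ) (hp : 1 < p) (hpq : p < q) :
    (∀ n : ℕ, (Tmap p q)^[n] (1 / (q : ℝ)) =
        (q : ℝ) ^ (Int.fract ((n : ℝ) * (Real.log p / Real.log q)) - 1)) ∧
    (∀ n : ℕ, (¬ ∃ m : ℤ, (n : ℝ) * (Real.log p / Real.log q) = (m : ℝ)) →
        (Tmap p q)^[n] (1 / (q : ℝ)) =
          (p : ℝ) ^ n / (q : ℝ) ^ ⌈(n : ℝ) * (Real.log p / Real.log q)⌉ ∧
        ⌈(n : ℝ) * (Real.log p / Real.log q)⌉ = ((Nat.digits q (p ^ n)).length : ℤ)) := by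
  have hq1 : 1 < q := hp.trans hpq
  have hq0 : (0:ℝ) < q := by exact_mod_cast Nat.zero_lt_of_lt hq1
  have hq1' : (1:ℝ) < q := by exact_mod_cast hq1
  have hp0 : (0:ℝ) < p := by positivity
  have hp1 : (1:ℝ) < p := by exact_mod_cast hp
  have hlq : 0 < Real.log q := Real.log_pos hq1'
  have hlp : 0 < Real.log p := Real.log_pos hp1
  set α : ℝ := Real.log p / Real.log q with hα
  have hα0 : 0 < α := div_pos hlp hlq
  have hα1 : α < 1 := by
    rw [hα, div_lt_one hlq]
    exact Real.log_lt_log hp0 (by exact_mod_cast hpq)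
  have hqα : (q:ℝ) ^ α = p := by
    rw [Real.rpow_def_of_pos hq0, hα, mul_comm, div_mul_cancel₀ _ hlq.ne', Real.exp_log hp0]
  have hinv : (q:ℝ) ^ (-α) = 1 / p := by
    rw [Real.rpow_neg hq0.le, hqα, one_div]
  -- main induction
  have key : ∀ n : ℕ, (Tmap p q)^[n] (1 / (q : ℝ)) =
      (q : ℝ) ^ (Int.fract ((n : ℝ) * α) - 1) := by
    intro n
    induction n with
    | zero =>
      simp only [Function.iterate_zero_apply, Nat.cast_zero, zero_mul, Int.fract_zero]
      rw [show (0:ℝ) - 1 = -1 by ring, Real.rpow_neg_one, one_div]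
    | succ n ih =>
      rw [Function.iterate_succ_apply', ih]
      have hf0 : 0 ≤ Int.fract ((n:ℝ) * α) := Int.fract_nonneg _
      have hf1 : Int.fract ((n:ℝ) * α) < 1 := Int.fract_lt_one _
      have hfr : Int.fract (((n:ℕ)+1 : ℝ) * α) = Int.fract (Int.fract ((n:ℝ) * α) + α) := by
        have h1 : ((n:ℕ)+1 : ℝ) * α = (⌊(n:ℝ)*α⌋ : ℝ) + (Int.fract ((n:ℝ) * α) + α) := by
          rw [← add_assoc, Int.floor_add_fract]; push_cast; ring
        rw [h1, Int.fract_intCast_add]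
      by_cases hc : Int.fract ((n:ℝ) * α) + α < 1
      · have hlt : (q:ℝ) ^ (Int.fract ((n:ℝ) * α) - 1) < 1 / p := by
          rw [← hinv]
          exact (Real.rpow_lt_rpow_left_iff hq1').mpr (by linarith)
        rw [Tmap, if_pos hlt]
        push_cast
        rw [hfr, Int.fract_eq_self.mpr ⟨by positivity, hc⟩, ← hqα,
          ← Real.rpow_add hq0]
        ring_nf
      · have hge : ¬ (q:ℝ) ^ (Int.fract ((n:ℝ) * α) - 1) < 1 / p := by
          rw [← hinv]
          exact not_lt.mpr ((Real.rpow_le_rpow_left_iff hq1').mpr (by linarith))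
        rw [Tmap, if_neg hge]
        push_cast
        have h2 : Int.fract (Int.fract ((n:ℝ) * α) + α) =
            Int.fract ((n:ℝ) * α) + α - 1 := by
          rw [Int.fract_eq_iff]
          exact ⟨by linarith, by linarith, ⟨1, by push_cast; ring⟩⟩
        rw [hfr, h2, ← hqα]
        rw [show ((q:ℝ)^α / q * (q:ℝ) ^ (Int.fract ((n:ℝ)*α) - 1)) =
            (q:ℝ)^α * (q:ℝ) ^ (Int.fract ((n:ℝ)*α) - 1) / (q:ℝ)^(1:ℝ) by
          rw [Real.rpow_one]; ring]
        rw [← Real.rpow_add hq0, ← Real.rpow_sub hq0]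
        ring_nf
  refine ⟨fun n => key n, fun n hn => ?_⟩
  have hne : (n:ℝ) * α ≠ (⌊(n:ℝ)*α⌋ : ℝ) := fun h => hn ⟨⌊(n:ℝ)*α⌋, h⟩
  have hflt : (⌊(n:ℝ)*α⌋ : ℝ) < (n:ℝ)*α := lt_of_le_of_ne (Int.floor_le _) (Ne.symm hne)
  have hceil : ⌈(n:ℝ)*α⌉ = ⌊(n:ℝ)*α⌋ + 1 := by
    rw [Int.ceil_eq_iff]
    refine ⟨by push_cast; linarith, by push_cast; linarith [Int.lt_floor_add_one ((n:ℝ)*α)]⟩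
  have hpn : (q:ℝ) ^ ((n:ℝ) * α) = (p:ℝ) ^ n := by
    rw [mul_comm, Real.rpow_mul hq0.le, hqα, Real.rpow_natCast]
  constructor
  · rw [key n, hceil]
    rw [Int.fract]
    rw [show (n:ℝ)*α - (⌊(n:ℝ)*α⌋:ℝ) - 1 = (n:ℝ)*α - ((⌊(n:ℝ)*α⌋:ℝ) + 1) by ring,
      Real.rpow_sub hq0, hpn]
    norm_num [Real.rpow_intCast]
    rw [show ((⌊(n:ℝ)*α⌋:ℝ) + 1) = (((⌊(n:ℝ)*α⌋ + 1 : ℤ)):ℝ) by push_cast; ring,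
      Real.rpow_intCast]
  · have hpn0 : p ^ n ≠ 0 := pow_ne_zero _ (by omega)
    rw [Nat.digits_len q _ hq1 hpn0, hceil]
    set L := Nat.log q (p ^ n) with hL
    have h1 : q ^ L ≤ p ^ n := Nat.pow_log_le_self q hpn0
    have h2 : p ^ n < q ^ (L + 1) := Nat.lt_pow_succ_log_self hq1 _
    -- translate to reals
    have h1' : (L:ℝ) * Real.log q ≤ (n:ℝ) * Real.log p := by
      have := Real.log_le_log (by positivity) (show ((q:ℝ))^L ≤ (p:ℝ)^n by exact_mod_cast h1)
      rwa [Real.log_pow, Real.log_pow] at this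
    have h2' : (n:ℝ) * Real.log p < ((L:ℝ) + 1) * Real.log q := by
      have := Real.log_lt_log (by positivity) (show ((p:ℝ))^n < (q:ℝ)^(L+1) by exact_mod_cast h2)
      rw [Real.log_pow, Real.log_pow] at this
      push_cast at this ⊢
      linarith
    have hle : (L:ℝ) ≤ (n:ℝ) * α := by
      rw [hα, mul_div_assoc', le_div_iff₀ hlq]
      linarith
    have hlt2 : (n:ℝ) * α < (L:ℝ) + 1 := by
      rw [hα, mul_div_assoc', div_lt_iff₀ hlq]
      linarith
    have hfl : ⌊(n:ℝ)*α⌋ = (L:ℤ) := by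
      rw [Int.floor_eq_iff]
      exact ⟨by exact_mod_cast hle, by exact_mod_cast hlt2⟩
    rw [hfl]; push_cast; ring
end

section
/- Let 1 < p < q be integers, set α = log p / log q, and define h : [0, 1) → [1/q, 1) by h(t) = q^{t−1}. Then h conjugates the rotation by α to T_{p,q}: for every t ∈ [0, 1), h({t + α}) = T_{p,q}(h(t)), where {·} denotes fractional part. -/
/-- For integers `1 < p < q`, `α = log p / log q`, and `h(t) = q^(t-1)`, the map
`h` conjugates the rotation by `α` to `T_{p,q}`: for every `t ∈ [0,1)`,
`h({t + α}) = T_{p,q}(h(t))`. -/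
theorem h_conjugates_rotation_to_Tmap (p q : ℕ) (hp : 1 < p) (hpq : p < q)
    (t : ℝ) (ht : t ∈ Set.Ico (0 : ℝ) 1) :
    (q : ℝ) ^ (Int.fract (t + Real.log p / Real.log q) - 1) =
      Tmap p q ((q : ℝ) ^ (t - 1)) := by
  obtain ⟨ht0, ht1⟩ := ht
  have hp0 : (0:ℝ) < p := by positivity
  have hq1 : (1:ℝ) < q := by exact_mod_cast hp.trans hpq
  have hq0 : (0:ℝ) < q := by linarith
  set α : ℝ := Real.log p / Real.log q with hα
  have hαb : α = Real.logb q p := rfl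
  have hqα : (q:ℝ) ^ α = p := by
    rw [hαb]; exact Real.rpow_logb hq0 (ne_of_gt hq1) hp0
  have hα0 : 0 < α := by
    rw [hαb]
    exact Real.logb_pos hq1 (by exact_mod_cast hp)
  have hα1 : α < 1 := by
    rw [hαb]
    rw [Real.logb_lt_iff_lt_rpow (hb := hq1) hp0, Real.rpow_one]
    exact_mod_cast hpq
  -- comparison: q^(t-1) < 1/p ↔ t < 1 - α
  have hcmp : (q:ℝ) ^ (t - 1) < 1 / p ↔ t + α < 1 := by
    have h1p : (1:ℝ)/p = (q:ℝ) ^ (-α) := by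
      rw [Real.rpow_neg hq0.le, hqα, one_div]
    rw [h1p, Real.rpow_lt_rpow_left_iff hq1]
    constructor <;> intro <;> linarith
  unfold Tmap
  by_cases hc : t + α < 1
  · rw [if_pos (hcmp.mpr hc)]
    have hf : Int.fract (t + α) = t + α :=
      Int.fract_eq_self.mpr ⟨by linarith, hc⟩
    rw [hf, show t + α - 1 = α + (t - 1) by ring, Real.rpow_add hq0, hqα]
  · rw [if_neg (fun h => hc (hcmp.mp h))]
    push_neg at hc
    have hf : Int.fract (t + α) = t + α - 1 := by
      have : Int.fract (t + α - 1) = t + α - 1 :=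
        Int.fract_eq_self.mpr ⟨by linarith, by linarith⟩
      rw [← this, show t + α - 1 = t + α - (1:ℤ) by push_cast; ring,
        Int.fract_sub_intCast]
    rw [hf, show t + α - 1 - 1 = α + -1 + (t - 1) by ring,
      Real.rpow_add hq0, Real.rpow_add hq0, hqα, Real.rpow_neg_one]
    field_simp
end

section
/- Let 1 < p < q be integers, and let μ be the Borel measure on [1/q, 1] with density dμ(x) = dx/(x·log q) with respect to Lebesgue measure. Then μ is a probability measure invariant under T_{p,q}: for every Borel set E ⊆ [1/q, 1], μ(T_{p,q}^{−1}(E)) = μ(E). -/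
/-!
The measure `dx / (x log q)` is a multiple of the Haar measure of the multiplicative group
`(0, ∞)`, so it is invariant under every dilation `x ↦ c x` with `c > 0`. Up to the null
endpoint `1`, `T_{p,q}` cuts `[1/q, 1)` at `1/p` and maps `[1/q, 1/p)` by `x ↦ p x` onto
`[p/q, 1)` and `[1/p, 1)` by `x ↦ (p/q) x` onto `[1/q, p/q)`; so the preimage of `E` splits into
two dilated copies of the two pieces of `E`, each of the same measure. The total mass is
`∫_{1/q}^1 dx / (x log q) = 1`.
-/

open MeasureTheory

open Set Real

theorem measure_Ico_inter_add_Ico_inter {α : Type*} [TopologicalSpace α] [LinearOrder α]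
    [OrderClosedTopology α] [MeasurableSpace α] [OpensMeasurableSpace α] (μ : Measure α)
    {a b c : α} (hab : a ≤ b) (hbc : b ≤ c) {S : Set α} (hS : MeasurableSet S) :
    μ (Ico a b ∩ S) + μ (Ico b c ∩ S) = μ (Ico a c ∩ S) := by
  rw [← measure_union ((Ico_disjoint_Ico_same).mono inter_subset_left inter_subset_left)
    (measurableSet_Ico.inter hS), ← union_inter_distrib_right, Ico_union_Ico_eq_Ico hab hbc]

noncomputable def invMeasure (L : ℝ) : Measure ℝ :=
  volume.withDensity fun x => ENNReal.ofReal (1 / (x * L))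

theorem invMeasure_absolutelyContinuous (L : ℝ) : invMeasure L ≪ volume :=
  withDensity_absolutelyContinuous _ _

theorem invMeasure_Ioc {L a b : ℝ} (hL : 0 ≤ L) (ha : 0 < a) (hab : a ≤ b) :
    invMeasure L (Ioc a b) = ENNReal.ofReal (log (b / a) / L) := by
  have hpos : ∀ x ∈ Ioc a b, 0 ≤ x⁻¹ * L⁻¹ := fun x hx =>
    mul_nonneg (inv_nonneg.2 (ha.trans hx.1).le) (inv_nonneg.2 hL)
  have hint : IntervalIntegrable (fun x => x⁻¹ * L⁻¹) volume a b :=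
    (intervalIntegral.intervalIntegrable_inv
      (fun x hx => (ha.trans_le (uIcc_of_le hab ▸ hx).1).ne') continuousOn_id).mul_const _
  simp_rw [invMeasure, withDensity_apply _ measurableSet_Ioc, one_div, mul_inv]
  rw [← ofReal_integral_eq_lintegral_ofReal hint.1
      ((ae_restrict_iff' measurableSet_Ioc).2 (ae_of_all _ hpos)),
    ← intervalIntegral.integral_of_le hab, intervalIntegral.integral_mul_const,
    integral_inv_of_pos ha (ha.trans_le hab), ← div_eq_mul_inv]

theorem invMeasure_preimage_const_mul (L : ℝ) {c : ℝ} (hc : 0 < c) {A : Set ℝ}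
    (hA : MeasurableSet A) : invMeasure L ((c * ·) ⁻¹' A) = invMeasure L A := by
  have hs : MeasurableSet ((c * ·) ⁻¹' A) := measurable_const_mul c hA
  have himage : (c * ·) '' ((c * ·) ⁻¹' A) = A :=
    image_preimage_eq A (mul_left_surjective₀ hc.ne')
  rw [invMeasure, withDensity_apply _ hs, withDensity_apply _ hA]
  conv_rhs => rw [← himage]
  rw [lintegral_image_eq_lintegral_abs_deriv_mul (f' := fun _ => c) hs
    (fun x _ => by simpa using ((hasDerivAt_id x).const_mul c).hasDerivWithinAt)
    (mul_right_injective₀ hc.ne').injOn]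
  refine setLIntegral_congr_fun hs fun x _ => ?_
  rw [← ENNReal.ofReal_mul (abs_nonneg _), abs_of_pos hc, mul_one_div, mul_assoc,
    div_mul_cancel_left₀ hc.ne', one_div]

theorem invMeasure_Ico_inter_preimage_const_mul (L : ℝ) {c a b a' b' : ℝ} (hc : 0 < c)
    (ha : c * a = a') (hb : c * b = b') {E : Set ℝ} (hE : MeasurableSet E) :
    invMeasure L (Ico a b ∩ (c * ·) ⁻¹' E) = invMeasure L (Ico a' b' ∩ E) := by
  rw [← invMeasure_preimage_const_mul L hc (measurableSet_Ico.inter hE), preimage_inter,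
    preimage_const_mul_Ico₀ _ _ hc, ← ha, ← hb, mul_div_cancel_left₀ _ hc.ne',
    mul_div_cancel_left₀ _ hc.ne']

theorem measurable_Tmap (p q : ℕ) : Measurable (Tmap p q) :=
  Measurable.ite measurableSet_Iio (measurable_const_mul _) (measurable_const_mul _)

theorem invMeasure_Ico_inter_Tmap_preimage (L : ℝ) {p q : ℕ} (hp : 0 < p) (hpq : p ≤ q)
    {E : Set ℝ} (hE : MeasurableSet E) :
    invMeasure L (Ico (1 / q) 1 ∩ Tmap p q ⁻¹' E) = invMeasure L (Ico (1 / q) 1 ∩ E) := by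
  have hp' : (0 : ℝ) < p := Nat.cast_pos.2 hp
  have hq' : (0 : ℝ) < q := Nat.cast_pos.2 (hp.trans_le hpq)
  have hpq' : (p : ℝ) ≤ q := Nat.cast_le.2 hpq
  have hlow : EqOn (Tmap p q) ((p : ℝ) * ·) (Ico (1 / q) (1 / p)) := fun x hx => if_pos hx.2
  have hhigh : EqOn (Tmap p q) ((p : ℝ) / q * ·) (Ico (1 / p) 1) :=
    fun x hx => if_neg (not_lt.2 hx.1)
  have hTE : MeasurableSet (Tmap p q ⁻¹' E) := measurable_Tmap p q hE
  calc invMeasure L (Ico (1 / q) 1 ∩ Tmap p q ⁻¹' E)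
      = invMeasure L (Ico (1 / q) (1 / p) ∩ Tmap p q ⁻¹' E)
          + invMeasure L (Ico (1 / p) 1 ∩ Tmap p q ⁻¹' E) :=
        (measure_Ico_inter_add_Ico_inter _ (one_div_le_one_div_of_le hp' hpq')
          ((div_le_one hp').2 (by exact_mod_cast hp)) hTE).symm
    _ = invMeasure L (Ico (1 / q) (1 / p) ∩ ((p : ℝ) * ·) ⁻¹' E)
          + invMeasure L (Ico (1 / p) 1 ∩ ((p : ℝ) / q * ·) ⁻¹' E) := by
        rw [hlow.inter_preimage_eq, hhigh.inter_preimage_eq]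
    _ = invMeasure L (Ico (p / q) 1 ∩ E) + invMeasure L (Ico (1 / q) (p / q) ∩ E) := by
        rw [invMeasure_Ico_inter_preimage_const_mul L hp' (mul_one_div _ _)
            (mul_one_div_cancel hp'.ne') hE,
          invMeasure_Ico_inter_preimage_const_mul L (div_pos hp' hq') (a' := 1 / q)
            (by field_simp) (mul_one _) hE]
    _ = invMeasure L (Ico (1 / q) 1 ∩ E) := by
        rw [add_comm]
        exact measure_Ico_inter_add_Ico_inter _
          (div_le_div_of_nonneg_right (by exact_mod_cast hp) hq'.le) ((div_le_one hq').2 hpq') hE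

/-- The measure `dμ(x) = dx/(x·log q)` on `[1/q, 1]` is a probability measure
invariant under `T_{p,q}`: `μ(T_{p,q}⁻¹(E)) = μ(E)` for every Borel
`E ⊆ [1/q, 1]`. -/
theorem Tmap_invariant_measure (p q : ℕ) (hp : 1 < p) (hpq : p < q) :
    letI μ : Measure ℝ :=
      (volume.withDensity fun x => ENNReal.ofReal (1 / (x * Real.log q))).restrict
        (Set.Icc (1 / (q : ℝ)) 1)
    IsProbabilityMeasure μ ∧
      ∀ E : Set ℝ, MeasurableSet E → E ⊆ Set.Icc (1 / (q : ℝ)) 1 →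
        μ (Tmap p q ⁻¹' E) = μ E := by
  have hq : (1 : ℝ) < q := by exact_mod_cast hp.trans hpq
  rw [show volume.withDensity (fun x => ENNReal.ofReal (1 / (x * log q))) = invMeasure (log q)
      from rfl,
    Measure.restrict_congr_set ((invMeasure_absolutelyContinuous _).ae_eq Ico_ae_eq_Icc).symm]
  refine ⟨⟨?_⟩, fun E hE _ => ?_⟩
  · rw [Measure.restrict_apply_univ,
      measure_congr ((invMeasure_absolutelyContinuous _).ae_eq Ico_ae_eq_Ioc),
      invMeasure_Ioc (log_pos hq).le (by positivity) ((div_le_one (by positivity)).2 hq.le),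
      one_div_one_div, div_self (log_pos hq).ne', ENNReal.ofReal_one]
  · rw [Measure.restrict_apply' measurableSet_Ico, Measure.restrict_apply' measurableSet_Ico,
      inter_comm, inter_comm E,
      invMeasure_Ico_inter_Tmap_preimage _ (by omega) hpq.le hE]
end

section
/- Let 1 < p < q be integers such that log p / log q is irrational. Then the set A = {n ∈ ℕ : S_q(p^n) = 0}, i.e., the set of n for which the base-q expansion of p^n contains at least one digit 0, has asymptotic density equal to 1: (1/N)·#{0 ≤ n < N : the base-q expansion of p^n contains the digit 0} → 1 as N → ∞. -/
/-!
Write `θ = log p / log q = log_q p`. If `p ^ n ≥ q ^ k` has no digit `0` in base `q`, its leading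
`k + 1` digits form a zero-free `D ∈ [q ^ k, q ^ (k + 1))`, and the fractional part of `n θ` lies in
the window `[log_q D - k, log_q (D + 1) - k)`, of length at most `1 / (q ^ k log q)`. There are at
most `(q - 1) ^ (k + 1)` such `D`, so these windows have total length `O(((q - 1) / q) ^ k)`.

Since `θ` is irrational, Dirichlet's theorem gives `m > 0` and `c` with `0 < |m θ - c| < δ`.
Along each residue class of `n` modulo `m`, the points `n θ` form an arithmetic progression
modulo `1` with step `m θ - c`, so a window of length `ℓ` is hit by at most `(2 ℓ + δ) N + O(1)`
of the first `N` terms. Letting `k → ∞` and `δ → 0`, the exceptional `n` have density `0`.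
-/

open Filter Finset Real Topology

lemma card_le_of_forall_add_mul_mem_Ico {F : Finset ℕ} {x σ a b : ℝ} (hσ : σ ≠ 0) (hab : a ≤ b)
    (hF : ∀ k ∈ F, x + k * σ ∈ Set.Ico a b) : (#F : ℝ) ≤ (b - a) / |σ| + 1 := by
  rcases F.eq_empty_or_nonempty with rfl | hne
  · simp only [card_empty, CharP.cast_eq_zero]
    positivity
  set m := F.min' hne
  have hsub : F ⊆ Icc m (m + ⌊(b - a) / |σ|⌋₊) := by
    intro k hk
    have hmk : m ≤ k := F.min'_le k hk
    obtain ⟨hk₁, hk₂⟩ := hF k hk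
    obtain ⟨hm₁, hm₂⟩ := hF m (F.min'_mem hne)
    have hdist : ((k - m : ℕ) : ℝ) * |σ| < b - a := calc
      ((k - m : ℕ) : ℝ) * |σ| = |(x + k * σ) - (x + m * σ)| := by
        rw [Nat.cast_sub hmk, ← abs_of_nonneg (sub_nonneg.2 (Nat.cast_le.2 hmk)), ← abs_mul]
        ring_nf
      _ < b - a := abs_sub_lt_iff.2 ⟨by linarith, by linarith⟩
    have : k - m ≤ ⌊(b - a) / |σ|⌋₊ :=
      Nat.le_floor ((le_div_iff₀ (abs_pos.2 hσ)).2 hdist.le)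
    exact mem_Icc.2 ⟨hmk, by omega⟩
  calc (#F : ℝ) ≤ #(Icc m (m + ⌊(b - a) / |σ|⌋₊)) := mod_cast card_le_card hsub
    _ = ⌊(b - a) / |σ|⌋₊ + 1 := by
      rw [Nat.card_Icc, Nat.add_assoc, Nat.add_sub_cancel_left]
      push_cast
      ring
    _ ≤ (b - a) / |σ| + 1 := by
      gcongr
      exact Nat.floor_le (div_nonneg (sub_nonneg.2 hab) (abs_nonneg σ))

lemma card_image_floor_add_mul_le (x σ : ℝ) (K : ℕ) :
    (#((range K).image fun k : ℕ => ⌊x + k * σ⌋) : ℝ) ≤ 2 * K * |σ| + 2 := by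
  have hK : 0 ≤ (K : ℝ) * |σ| := by positivity
  have hsub : (range K).image (fun k : ℕ => ⌊x + k * σ⌋) ⊆ Icc ⌊x - K * |σ|⌋ ⌊x + K * |σ|⌋ := by
    intro j hj
    obtain ⟨k, hk, rfl⟩ := mem_image.1 hj
    have hkK : (k : ℝ) * |σ| ≤ K * |σ| := by gcongr; exact_mod_cast (mem_range.1 hk).le
    have hkσ : |(k : ℝ) * σ| = k * |σ| := by rw [abs_mul, Nat.abs_cast]
    exact mem_Icc.2 ⟨Int.floor_mono (by linarith [neg_abs_le ((k : ℝ) * σ)]),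
      Int.floor_mono (by linarith [le_abs_self ((k : ℝ) * σ)])⟩
  have hIcc : (#(Icc ⌊x - K * |σ|⌋ ⌊x + K * |σ|⌋) : ℤ) = ⌊x + K * |σ|⌋ + 1 - ⌊x - K * |σ|⌋ :=
    Int.card_Icc_of_le _ _ (by linarith [Int.floor_mono (by linarith : x - K * |σ| ≤ x + K * |σ|)])
  calc (#((range K).image fun k : ℕ => ⌊x + k * σ⌋) : ℝ)
      ≤ #(Icc ⌊x - K * |σ|⌋ ⌊x + K * |σ|⌋) := mod_cast card_le_card hsub
    _ = (⌊x + K * |σ|⌋ + 1 - ⌊x - K * |σ|⌋ : ℤ) := by rw [← hIcc]; norm_cast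
    _ ≤ 2 * K * |σ| + 2 := by
      push_cast
      linarith [Int.floor_le (x + K * |σ|), Int.lt_floor_add_one (x - K * |σ|)]

lemma card_fract_add_mul_mem_Ico_le {x σ a b : ℝ} (hσ : σ ≠ 0) (hab : a ≤ b) (K : ℕ) :
    (#{k ∈ range K | Int.fract (x + ↑k * σ) ∈ Set.Ico a b} : ℝ) ≤
      (2 * K * |σ| + 2) * ((b - a) / |σ| + 1) := by
  set H := {k ∈ range K | Int.fract (x + ↑k * σ) ∈ Set.Ico a b}
  set g : ℕ → ℤ := fun k => ⌊x + k * σ⌋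
  have hfiber : ∀ j ∈ H.image g, (#{k ∈ H | g k = j} : ℝ) ≤ (b - a) / |σ| + 1 := by
    intro j _
    -- the terms with integer part `j` lie in `[j + a, j + b)`
    refine card_le_of_forall_add_mul_mem_Ico (x := x - j) hσ hab fun k hk => ?_
    obtain ⟨hkH, rfl⟩ := mem_filter.1 hk
    simpa only [Int.fract, sub_add_eq_add_sub] using (mem_filter.1 hkH).2
  have himage : (#(H.image g) : ℝ) ≤ 2 * K * |σ| + 2 :=
    le_trans (mod_cast card_le_card (image_subset_image (filter_subset _ _)))
      (card_image_floor_add_mul_le x σ K)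
  calc (#H : ℝ) = ∑ j ∈ H.image g, (#{k ∈ H | g k = j} : ℝ) := by
        exact_mod_cast card_eq_sum_card_image g H
    _ ≤ #(H.image g) * ((b - a) / |σ| + 1) := by
        simpa only [nsmul_eq_mul] using sum_le_card_nsmul _ _ _ hfiber
    _ ≤ (2 * K * |σ| + 2) * ((b - a) / |σ| + 1) := by
        gcongr

lemma card_fract_mul_mem_Ico_le {θ a b : ℝ} (hab : a ≤ b) {m : ℕ} (hm : 0 < m) {c : ℤ}
    (hσ : m * θ - c ≠ 0) (N : ℕ) :
    (#{n ∈ range N | Int.fract (↑n * θ) ∈ Set.Ico a b} : ℝ) ≤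
      (2 * (N + m) * |m * θ - c| + 2 * m) * ((b - a) / |m * θ - c| + 1) := by
  set σ := (m : ℝ) * θ - c
  set K := N / m + 1
  have hfract (r k : ℕ) : Int.fract (((r + k * m : ℕ) : ℝ) * θ) = Int.fract (r * θ + k * σ) := by
    rw [show ((r + k * m : ℕ) : ℝ) * θ = r * θ + k * σ + ((k * c : ℤ) : ℝ) by push_cast; ring,
      Int.fract_add_intCast]
  have hsub : {n ∈ range N | Int.fract (↑n * θ) ∈ Set.Ico a b} ⊆ (range m).biUnion fun r =>
      {k ∈ range K | Int.fract (r * θ + ↑k * σ) ∈ Set.Ico a b}.image fun k => r + k * m := by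
    intro n hn
    obtain ⟨hnN, hn⟩ := mem_filter.1 hn
    refine mem_biUnion.2 ⟨n % m, mem_range.2 (Nat.mod_lt _ hm),
      mem_image.2 ⟨n / m, mem_filter.2 ⟨?_, ?_⟩, Nat.mod_add_div' n m⟩⟩
    · have := Nat.div_le_div_right (c := m) (mem_range.1 hnN).le
      exact mem_range.2 (by omega)
    · rwa [← hfract, Nat.mod_add_div']
  have hmK : (m : ℝ) * K ≤ N + m := by
    have := Nat.mul_div_le N m
    exact_mod_cast (show m * K ≤ N + m by rw [Nat.mul_add_one]; omega)
  calc (#{n ∈ range N | Int.fract (↑n * θ) ∈ Set.Ico a b} : ℝ)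
      ≤ ∑ r ∈ range m, (#{k ∈ range K | Int.fract (r * θ + ↑k * σ) ∈ Set.Ico a b} : ℝ) := by
        exact_mod_cast (card_le_card hsub).trans
          (card_biUnion_le.trans (sum_le_sum fun r _ => card_image_le))
    _ ≤ ∑ r ∈ range m, (2 * K * |σ| + 2) * ((b - a) / |σ| + 1) :=
        sum_le_sum fun r _ => card_fract_add_mul_mem_Ico_le hσ hab K
    _ = (2 * (m * K) * |σ| + 2 * m) * ((b - a) / |σ| + 1) := by
        rw [sum_const, card_range, nsmul_eq_mul]; ring
    _ ≤ (2 * (N + m) * |σ| + 2 * m) * ((b - a) / |σ| + 1) := by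
        gcongr

lemma Irrational.exists_abs_mul_sub_lt {θ : ℝ} (hθ : Irrational θ) {δ : ℝ} (hδ : 0 < δ) :
    ∃ (m : ℕ) (c : ℤ), 0 < m ∧ (m : ℝ) * θ - c ≠ 0 ∧ |(m : ℝ) * θ - c| < δ := by
  obtain ⟨n, hn⟩ := exists_nat_one_div_lt hδ
  obtain ⟨c, k, hk, -, hkc⟩ := Real.exists_int_int_abs_mul_sub_le θ n.succ_pos
  lift k to ℕ using hk.le
  have hk₀ : k ≠ 0 := by exact_mod_cast hk.ne'
  refine ⟨k, c, Nat.pos_of_ne_zero hk₀, ((hθ.natCast_mul hk₀).sub_intCast c).ne_zero,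
    hkc.trans_lt (lt_of_le_of_lt ?_ hn)⟩
  push_cast
  gcongr
  linarith

lemma Irrational.exists_card_fract_mul_mem_Ico_le {θ : ℝ} (hθ : Irrational θ) {δ : ℝ}
    (hδ : 0 < δ) : ∃ C : ℝ, ∀ (a b : ℝ) (N : ℕ), a ≤ b → b ≤ a + 1 →
      (#{n ∈ range N | Int.fract (↑n * θ) ∈ Set.Ico a b} : ℝ) ≤ (2 * (b - a) + δ) * N + C := by
  obtain ⟨m, c, hm, hσ, hσδ⟩ := hθ.exists_abs_mul_sub_lt (half_pos hδ)
  set s := |(m : ℝ) * θ - c|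
  have hs : 0 < s := abs_pos.2 hσ
  refine ⟨2 * m * (2 + s + 1 / s), fun a b N hab hba =>
    (card_fract_mul_mem_Ico_le hab hm hσ N).trans ?_⟩
  have h₁ : 2 * s * N ≤ δ * N := by gcongr; linarith
  have h₂ : 2 * m * (b - a) ≤ 2 * m := by nlinarith [(Nat.cast_nonneg m : (0 : ℝ) ≤ m)]
  have h₃ : 2 * m * ((b - a) / s) ≤ 2 * m * (1 / s) := by gcongr; linarith
  calc (2 * (N + m) * s + 2 * m) * ((b - a) / s + 1)
      = 2 * (b - a) * N + 2 * s * N + 2 * m * (b - a) + 2 * m * s + 2 * m * ((b - a) / s)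
        + 2 * m := by field_simp; ring
    _ ≤ (2 * (b - a) + δ) * N + 2 * m * (2 + s + 1 / s) := by linarith

lemma Nat.zero_mem_digits_of_zero_mem_digits_div_pow {q : ℕ} (hq : 1 < q) {m : ℕ} (j : ℕ)
    (h : 0 ∈ Nat.digits q (m / q ^ j)) : 0 ∈ Nat.digits q m := by
  induction j generalizing m with
  | zero => simpa using h
  | succ j ih =>
    rw [pow_succ', ← Nat.div_div_eq_div_mul] at h
    have h' := ih h
    have hm : m ≠ 0 := by rintro rfl; simp at h'
    rw [Nat.digits_eq_cons_digits_div hq hm]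
    exact List.mem_cons_of_mem _ h'

lemma card_filter_zero_notMem_digits_Ico_pow_le {q : ℕ} (hq : 1 < q) (k : ℕ) :
    #{D ∈ Ico (q ^ k) (q ^ (k + 1)) | 0 ∉ Nat.digits q D} ≤ (q - 1) ^ (k + 1) := by
  induction k with
  | zero => simpa using card_filter_le (Ico 1 q) _
  | succ k ih =>
    refine (card_le_card_of_injOn (fun D => (D / q, D % q))
      (t := {D ∈ Ico (q ^ k) (q ^ (k + 1)) | 0 ∉ Nat.digits q D} ×ˢ Ico 1 q) ?_ ?_).trans ?_
    · intro D hD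
      simp only [coe_filter, Set.mem_ofPred_eq, mem_Ico] at hD
      obtain ⟨⟨hD₁, hD₂⟩, hDdig⟩ := hD
      have hD₀ : D ≠ 0 := (pow_pos (by omega) _).trans_le hD₁ |>.ne'
      rw [Nat.digits_eq_cons_digits_div hq hD₀, List.mem_cons, not_or] at hDdig
      simp only [coe_product, coe_filter, Set.mem_prod, Set.mem_ofPred_eq, mem_Ico, coe_Ico,
        Set.mem_Ico]
      refine ⟨⟨⟨?_, ?_⟩, hDdig.2⟩, Nat.pos_of_ne_zero (Ne.symm hDdig.1), Nat.mod_lt _ (by omega)⟩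
      · rwa [Nat.le_div_iff_mul_le (by omega), ← pow_succ]
      · rwa [Nat.div_lt_iff_lt_mul (by omega), ← pow_succ]
    · intro a _ b _ hab
      simp only [Prod.mk.injEq] at hab
      rw [← Nat.div_add_mod a q, ← Nat.div_add_mod b q, hab.1, hab.2]
    · rw [card_product, Nat.card_Ico, pow_succ _ (k + 1)]
      exact Nat.mul_le_mul_right _ ih

lemma exists_leading_digits {q m : ℕ} (hq : 1 < q) {k : ℕ} (hm : q ^ k ≤ m) :
    ∃ D ∈ Ico (q ^ k) (q ^ (k + 1)), (0 ∈ Nat.digits q D → 0 ∈ Nat.digits q m) ∧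
      Int.fract (logb q m) ∈ Set.Ico (logb q D - k) (logb q (D + 1) - k) := by
  have hm₀ : m ≠ 0 := (pow_pos (by omega) _).trans_le hm |>.ne'
  set L := Nat.log q m
  have hkL : k ≤ L := Nat.le_log_of_pow_le hq hm
  set j := L - k
  set D := m / q ^ j
  have hqj : 0 < q ^ j := by positivity
  have hD₁ : q ^ k ≤ D := by
    rw [Nat.le_div_iff_mul_le hqj, ← pow_add, show k + j = L by omega]
    exact Nat.pow_log_le_self q hm₀
  have hD₂ : D < q ^ (k + 1) := by
    rw [Nat.div_lt_iff_lt_mul hqj, ← pow_add, show k + 1 + j = L + 1 by omega]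
    exact Nat.lt_pow_succ_log_self hq m
  refine ⟨D, mem_Ico.2 ⟨hD₁, hD₂⟩, Nat.zero_mem_digits_of_zero_mem_digits_div_pow hq j, ?_⟩
  have hq₁ : (1 : ℝ) < q := by exact_mod_cast hq
  have hD₀ : (0 : ℝ) < D := by exact_mod_cast (pow_pos (by omega) _).trans_le hD₁
  have hfract : Int.fract (logb q m) = logb q m - L := by
    rw [Int.fract, Real.floor_logb_natCast (Nat.cast_nonneg m), Int.log_natCast, Int.cast_natCast]
  have hlogb (x : ℝ) (hx : 0 < x) : logb q (x * q ^ j) = logb q x + j := by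
    rw [logb_mul hx.ne' (by positivity), logb_pow, logb_self_eq_one hq₁, mul_one]
  have hlow : logb q D + j ≤ logb q m := by
    rw [← hlogb D hD₀]
    exact logb_le_logb_of_le hq₁ (by positivity) (by exact_mod_cast Nat.div_mul_le_self m (q ^ j))
  have hhigh : logb q m < logb q (D + 1) + j := by
    rw [← hlogb (D + 1) (by positivity)]
    refine logb_lt_logb hq₁ (by positivity) ?_
    exact_mod_cast (show m < (D + 1) * q ^ j by rw [add_one_mul]; exact Nat.lt_div_mul_add hqj)
  have hj : (j : ℝ) = L - k := by rw [Nat.cast_sub hkL]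
  rw [hfract, Set.mem_Ico]
  constructor <;> linarith

lemma logb_add_one_sub_logb_le {b x : ℝ} (hb : 1 < b) (hx : 0 < x) :
    logb b (x + 1) - logb b x ≤ 1 / (x * log b) := by
  have hlog : log (x + 1) - log x ≤ 1 / x := by
    rw [← log_div (by positivity) hx.ne']
    calc log ((x + 1) / x) ≤ (x + 1) / x - 1 := log_le_sub_one_of_pos (by positivity)
      _ = 1 / x := by field_simp; ring
  rw [logb, logb, ← sub_div, ← div_div]
  gcongr
  exact (log_pos hb).le

lemma logb_add_one_sub_logb_bounds {q k D : ℕ} (hq : 1 < q)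
    (hD : D ∈ Ico (q ^ k) (q ^ (k + 1))) :
    0 ≤ logb q (D + 1) - logb q D ∧ logb q (D + 1) - logb q D ≤ 1 ∧
      logb q (D + 1) - logb q D ≤ 1 / (q ^ k * log q) := by
  have hq₁ : (1 : ℝ) < q := by exact_mod_cast hq
  have hlogq : 0 < log q := log_pos hq₁
  obtain ⟨hD₁, hD₂⟩ := mem_Ico.1 hD
  have hD₁' : (q : ℝ) ^ k ≤ D := by exact_mod_cast hD₁
  have hD₂' : (D : ℝ) + 1 ≤ q ^ (k + 1) := by exact_mod_cast hD₂
  have hD₀ : (0 : ℝ) < D := lt_of_lt_of_le (by positivity) hD₁'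
  have hlogb_pow (i : ℕ) : logb q ((q : ℝ) ^ i) = i := by
    rw [logb_pow, logb_self_eq_one hq₁, mul_one]
  have h₁ := logb_le_logb_of_le hq₁ (by positivity) hD₁'
  have h₂ := logb_le_logb_of_le hq₁ (by positivity) hD₂'
  rw [hlogb_pow] at h₁ h₂
  push_cast at h₂
  exact ⟨by linarith [logb_le_logb_of_le hq₁ hD₀ (le_add_of_nonneg_right zero_le_one)],
    by linarith, (logb_add_one_sub_logb_le hq₁ hD₀).trans (by gcongr)⟩

lemma filter_zero_notMem_digits_pow_subset {p q : ℕ} (hp : 1 < p) (hq : 1 < q) (k N : ℕ) :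
    {n ∈ range N | 0 ∉ Nat.digits q (p ^ n)} ⊆ range (q ^ k) ∪
      {D ∈ Ico (q ^ k) (q ^ (k + 1)) | 0 ∉ Nat.digits q D}.biUnion fun D =>
        {n ∈ range N | Int.fract (↑n * (log p / log q)) ∈
          Set.Ico (logb q D - k) (logb q (D + 1) - k)} := by
  intro n hn
  obtain ⟨hnN, hn⟩ := mem_filter.1 hn
  rcases lt_or_ge n (q ^ k) with h | h
  · exact mem_union_left _ (mem_range.2 h)
  obtain ⟨D, hD, hdig, hfract⟩ := exists_leading_digits hq (h.trans (Nat.lt_pow_self hp).le)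
  refine mem_union_right _ (mem_biUnion.2 ⟨D, mem_filter.2 ⟨hD, mt hdig hn⟩,
    mem_filter.2 ⟨hnN, ?_⟩⟩)
  have hlogb : logb q ((p ^ n : ℕ) : ℝ) = n * (log p / log q) := by
    rw [Nat.cast_pow, logb, log_pow, mul_div_assoc]
  rwa [hlogb] at hfract

lemma exists_card_zero_notMem_digits_pow_le {p q : ℕ} (hp : 1 < p) (hq : 1 < q)
    (hθ : Irrational (log p / log q)) (k : ℕ) {δ : ℝ} (hδ : 0 < δ) :
    ∃ C : ℝ, ∀ N : ℕ, (#{n ∈ range N | 0 ∉ Nat.digits q (p ^ n)} : ℝ) ≤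
      (2 / log q * ((q - 1) ^ (k + 1) / q ^ k) + δ) * N + C := by
  have hq₁ : (1 : ℝ) < q := by exact_mod_cast hq
  have hlogq : 0 < log q := log_pos hq₁
  set S := {D ∈ Ico (q ^ k) (q ^ (k + 1)) | 0 ∉ Nat.digits q D}
  set M : ℝ := ((q : ℝ) - 1) ^ (k + 1)
  have hM : 0 < M := pow_pos (by linarith) _
  have hSM : (#S : ℝ) ≤ M := by
    have := card_filter_zero_notMem_digits_Ico_pow_le hq k
    calc (#S : ℝ) ≤ ((q - 1) ^ (k + 1) : ℕ) := by exact_mod_cast this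
      _ = M := by push_cast [Nat.cast_sub hq.le]; rfl
  obtain ⟨C₀, hC₀⟩ := hθ.exists_card_fract_mul_mem_Ico_le (div_pos hδ hM)
  refine ⟨q ^ k + #S * C₀, fun N => ?_⟩
  calc (#{n ∈ range N | 0 ∉ Nat.digits q (p ^ n)} : ℝ)
      ≤ q ^ k + ∑ D ∈ S, (#{n ∈ range N | Int.fract (↑n * (log p / log q)) ∈
          Set.Ico (logb q D - k) (logb q (D + 1) - k)} : ℝ) := by
        have := (card_le_card (filter_zero_notMem_digits_pow_subset hp hq k N)).trans
          ((card_union_le _ _).trans (Nat.add_le_add (card_range _).le card_biUnion_le))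
        exact_mod_cast this
    _ ≤ q ^ k + ∑ D ∈ S, ((2 * (logb q (D + 1) - logb q D) + δ / M) * N + C₀) := by
        gcongr with D hD
        obtain ⟨h₀, h₁, -⟩ := logb_add_one_sub_logb_bounds hq (mem_filter.1 hD).1
        simpa only [sub_sub_sub_cancel_right] using
          hC₀ (logb q D - k) (logb q (D + 1) - k) N (by linarith) (by linarith)
    _ ≤ q ^ k + ∑ D ∈ S, ((2 * (1 / (q ^ k * log q)) + δ / M) * N + C₀) := by
        gcongr with D hD
        exact (logb_add_one_sub_logb_bounds hq (mem_filter.1 hD).1).2.2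
    _ = q ^ k + #S * ((2 * (1 / (q ^ k * log q)) + δ / M) * N) + #S * C₀ := by
        rw [sum_const, nsmul_eq_mul]
        ring
    _ ≤ q ^ k + M * ((2 * (1 / (q ^ k * log q)) + δ / M) * N) + #S * C₀ := by
        gcongr
    _ = (2 / log q * (M / q ^ k) + δ) * N + (q ^ k + #S * C₀) := by
        field_simp
        ring

lemma tendsto_sub_one_pow_succ_div_pow {x : ℝ} (hx : 1 ≤ x) :
    Tendsto (fun k : ℕ => (x - 1) ^ (k + 1) / x ^ k) atTop (𝓝 0) := by
  have h := (tendsto_pow_atTop_nhds_zero_of_lt_one (r := (x - 1) / x)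
    (div_nonneg (by linarith) (by linarith)) ((div_lt_one (by linarith)).2 (by linarith))).const_mul
    (x - 1)
  rw [mul_zero] at h
  refine h.congr fun k => ?_
  rw [div_pow, pow_succ']
  ring

lemma tendsto_div_natCast_nhds_zero_of_forall_le {f : ℕ → ℝ} (hf : ∀ N, 0 ≤ f N)
    (h : ∀ ε > 0, ∃ C, ∀ N, f N ≤ ε * N + C) :
    Tendsto (fun N : ℕ => f N / N) atTop (𝓝 0) := by
  refine NormedAddGroup.tendsto_nhds_zero.2 fun ε hε => ?_
  obtain ⟨C, hC⟩ := h (ε / 2) (half_pos hε)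
  filter_upwards [(tendsto_const_div_atTop_nhds_zero_nat C).eventually_lt_const (half_pos hε),
    eventually_gt_atTop 0] with N hCN hN
  have hN' : (0 : ℝ) < N := by exact_mod_cast hN
  rw [Real.norm_of_nonneg (div_nonneg (hf N) hN'.le), div_lt_iff₀ hN']
  linarith [hC N, (div_lt_iff₀ hN').1 hCN]

lemma tendsto_card_filter_div_nhds_one {P : ℕ → Prop} [DecidablePred P]
    (h : Tendsto (fun N : ℕ => (#{n ∈ range N | ¬P n} : ℝ) / N) atTop (𝓝 0)) :
    Tendsto (fun N : ℕ => (#{n ∈ range N | P n} : ℝ) / N) atTop (𝓝 1) := by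
  have h₁ : Tendsto (fun N : ℕ => 1 - (#{n ∈ range N | ¬P n} : ℝ) / N) atTop (𝓝 1) := by
    simpa using tendsto_const_nhds.sub h
  refine h₁.congr' ((eventually_gt_atTop 0).mono fun N hN => ?_)
  have hcard : (#{n ∈ range N | P n} : ℝ) + #{n ∈ range N | ¬P n} = N := by
    have := card_filter_add_card_filter_not (s := range N) P
    rw [card_range] at this
    exact_mod_cast this
  have hN' : (N : ℝ) ≠ 0 := by positivity
  rw [eq_div_iff hN', sub_mul, one_mul, div_mul_cancel₀ _ hN']
  linarith

/-- If `1 < p < q` and `log p / log q` is irrational, then the set of `n` such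
that the base-`q` expansion of `p^n` contains at least one digit `0` (i.e.
`S_q(p^n) = 0`) has asymptotic density `1`. -/
theorem density_zero_digit_pow (p q : ℕ) (hp : 1 < p) (hpq : p < q)
    (hirr : Irrational (Real.log p / Real.log q)) :
    Tendsto (fun N : ℕ =>
        (((Finset.range N).filter fun n => 0 ∈ Nat.digits q (p ^ n)).card : ℝ) / N)
      atTop (nhds 1) := by
  have hq : 1 < q := hp.trans hpq
  refine tendsto_card_filter_div_nhds_one (tendsto_div_natCast_nhds_zero_of_forall_le
    (fun N => by positivity) fun ε hε => ?_)
  have hlim := (tendsto_sub_one_pow_succ_div_pow (x := q) (by exact_mod_cast hq.le)).const_mul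
    (2 / log q)
  rw [mul_zero] at hlim
  obtain ⟨k, hk⟩ := (hlim.eventually_lt_const (half_pos hε)).exists
  obtain ⟨C, hC⟩ := exists_card_zero_notMem_digits_pow_le hp hq hirr k (half_pos hε)
  refine ⟨C, fun N => (hC N).trans ?_⟩
  gcongr
  linarith
end

section
/- Let q ≥ 2 be an integer and let p, p′ be integers with 1 < p < q and 1 < p′ < q. Then the maps T_{p,q} and T_{p′,q} commute: T_{p,q}(T_{p′,q}(x)) = T_{p′,q}(T_{p,q}(x)) for every x ∈ [1/q, 1]. Consequently the group generated by the maps T_{p,q} for all primes p < q is abelian. -/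
set_option maxHeartbeats 1000000 in
/-- For integers `q ≥ 2` and `1 < p, p' < q`, the maps `T_{p,q}` and `T_{p',q}`
commute on `[1/q, 1]`. -/
theorem Tmap_commute (q p p' : ℕ) (hq : 2 ≤ q) (hp : 1 < p) (hpq : p < q)
    (hp' : 1 < p') (hp'q : p' < q) (x : ℝ) (hx : x ∈ Set.Icc (1 / (q : ℝ)) 1) :
    Tmap p q (Tmap p' q x) = Tmap p' q (Tmap p q x) := by
  obtain ⟨hx1, hx2⟩ := hx
  have hp1 : (1:ℝ) < p := by exact_mod_cast hp
  have hp'1 : (1:ℝ) < p' := by exact_mod_cast hp'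
  have hq1 : (1:ℝ) < q := by exact_mod_cast lt_of_lt_of_le Nat.one_lt_two hq
  have hpq1 : (p:ℝ) < q := by exact_mod_cast hpq
  have hp'q1 : (p':ℝ) < q := by exact_mod_cast hp'q
  have hq0 : (0:ℝ) < q := by linarith
  have hp0 : (0:ℝ) < p := by linarith
  have hp'0 : (0:ℝ) < p' := by linarith
  have hx0 : 0 < x := lt_of_lt_of_le (by positivity) hx1
  have hqx : 1 ≤ (q:ℝ) * x := by
    rw [div_le_iff₀ hq0] at hx1; linarith
  simp only [Tmap, lt_div_iff₀ hp0, lt_div_iff₀ hp'0, div_mul_eq_mul_div, div_lt_iff₀ hq0, one_mul]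
  split_ifs <;>
  first
  | ring1
  | (field_simp; ring1)
  | (exfalso; push_neg at *;
     try simp only [div_mul_eq_mul_div, div_lt_iff₀ hq0, le_div_iff₀ hq0, one_mul] at *;
     nlinarith [hx0, hx2, hqx, mul_pos hp0 hp'0, mul_pos hp0 hx0, mul_pos hp'0 hx0,
       mul_pos (mul_pos hp0 hp'0) hx0,
       mul_pos (sub_pos.2 hp1) hx0, mul_pos (sub_pos.2 hp'1) hx0,
       mul_pos (sub_pos.2 hpq1) hx0, mul_pos (sub_pos.2 hp'q1) hx0])
end

section
/- Let q ≥ 2 be an integer that is not prime, and let p_1 < p_2 < ... < p_m be the complete list of primes smaller than q. Then the set A = {(n_1, ..., n_m) ∈ ℕ^m : S_q(p_1^{n_1}·p_2^{n_2}···p_m^{n_m}) = 0} has asymptotic density 1 in ℕ^m: (1/N^m)·#{(n_1,...,n_m) ∈ {0, 1, ..., N−1}^m : the base-q expansion of p_1^{n_1}···p_m^{n_m} contains the digit 0} → 1 as N → ∞. -/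
/-!
If every exponent `n i` is at least `q`, then each prime factor `r = p i` of `q` occurs in
`∏ p i ^ n i` with multiplicity at least `q > v_r(q)`, so `q` divides the product and its last
base-`q` digit is `0`. The tuples with all coordinates in `[q, N)` fill a proportion
`(1 - q / N) ^ m → 1` of the box `[0, N) ^ m`.
-/

open Filter

theorem Nat.dvd_prod_pow_of_le {ι : Type*} [Fintype ι] {q : ℕ} {p n : ι → ℕ} (hq : q ≠ 0)
    (hp : ∀ i, p i ≠ 0) (hfactors : ∀ r : ℕ, r.Prime → r ∣ q → ∃ i, p i = r)
    (hn : ∀ i, q ≤ n i) : q ∣ ∏ i, p i ^ n i := by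
  have hprod : ∏ i, p i ^ n i ≠ 0 := Finset.prod_ne_zero_iff.mpr fun i _ => pow_ne_zero _ (hp i)
  refine (Nat.factorization_prime_le_iff_dvd hq hprod).mp fun r hr => ?_
  by_cases hrq : r ∣ q
  · obtain ⟨i, rfl⟩ := hfactors r hr hrq
    have hpow : p i ^ n i ∣ ∏ j, p j ^ n j := Finset.dvd_prod_of_mem _ (Finset.mem_univ i)
    calc q.factorization (p i) ≤ q := (Nat.factorization_lt _ hq).le
      _ ≤ n i := hn i
      _ ≤ _ := (hr.pow_dvd_iff_le_factorization hprod).mp hpow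
  · simp [Nat.factorization_eq_zero_of_not_dvd hrq]

theorem Nat.zero_mem_digits_of_dvd {b n : ℕ} (hb : 1 < b) (hn : n ≠ 0) (hbn : b ∣ n) :
    0 ∈ b.digits n := by
  rw [Nat.digits_def' hb (Nat.pos_of_ne_zero hn), Nat.mod_eq_zero_of_dvd hbn]
  exact List.mem_cons_self

section Density

variable {ι : Type*} [Fintype ι] [DecidableEq ι] (P : (ι → ℕ) → Prop) [DecidablePred P]

theorem pow_sub_le_card_filter_piFinset_range {c : ℕ} (hP : ∀ n, (∀ i, c ≤ n i) → P n) (N : ℕ) :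
    (N - c) ^ Fintype.card ι ≤
      ((Fintype.piFinset fun _ : ι => Finset.range N).filter P).card := by
  calc (N - c) ^ Fintype.card ι = (Fintype.piFinset fun _ : ι => Finset.Ico c N).card := by
        simp [Fintype.card_piFinset]
    _ ≤ _ := Finset.card_le_card fun n hn => by
        simp only [Fintype.mem_piFinset, Finset.mem_Ico] at hn
        simp only [Finset.mem_filter, Fintype.mem_piFinset, Finset.mem_range]
        exact ⟨fun i => (hn i).2, hP n fun i => (hn i).1⟩

theorem tendsto_card_filter_piFinset_range_div_pow_of_forall_le {c : ℕ}
    (hP : ∀ n, (∀ i, c ≤ n i) → P n) :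
    Tendsto (fun N : ℕ =>
        (((Fintype.piFinset fun _ : ι => Finset.range N).filter P).card : ℝ) /
          (N : ℝ) ^ Fintype.card ι) atTop (nhds 1) := by
  set k := Fintype.card ι
  have hlower : Tendsto (fun N : ℕ => (1 - (c : ℝ) / N) ^ k) atTop (nhds 1) := by
    simpa using ((tendsto_const_nhds (x := (1 : ℝ))).sub (tendsto_const_div_atTop_nhds_zero_nat (c : ℝ))).pow k
  refine tendsto_of_tendsto_of_tendsto_of_le_of_le' hlower tendsto_const_nhds ?_ ?_
  · filter_upwards [eventually_gt_atTop c] with N hN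
    have hNpos : (0 : ℝ) < N := by exact_mod_cast (Nat.zero_le c).trans_lt hN
    have hcount : ((N - c : ℕ) : ℝ) ^ k ≤
        ((Fintype.piFinset fun _ : ι => Finset.range N).filter P).card := by
      exact_mod_cast pow_sub_le_card_filter_piFinset_range P hP N
    calc (1 - (c : ℝ) / N) ^ k = ((N - c : ℕ) : ℝ) ^ k / (N : ℝ) ^ k := by
          rw [Nat.cast_sub hN.le, ← div_pow, sub_div, div_self hNpos.ne']
      _ ≤ _ := div_le_div_of_nonneg_right hcount (by positivity)
  · refine Eventually.of_forall fun N => div_le_one_of_le₀ ?_ (by positivity)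
    calc (((Fintype.piFinset fun _ : ι => Finset.range N).filter P).card : ℝ)
        ≤ (Fintype.piFinset fun _ : ι => Finset.range N).card := by
          exact_mod_cast Finset.card_filter_le _ _
      _ = (N : ℝ) ^ k := by simp [Fintype.card_piFinset, k]

end Density

theorem density_zero_digit_prime_products_general (q m : ℕ) (hq : 2 ≤ q) (hnp : ¬ q.Prime)
    (p : Fin m → ℕ)
    (hprime : ∀ i, (p i).Prime ∧ p i < q)
    (hcomplete : ∀ r : ℕ, r.Prime → r < q → ∃ i, p i = r) :
    Tendsto (fun N : ℕ =>
        (((Fintype.piFinset fun _ : Fin m => Finset.range N).filter fun n =>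
            0 ∈ Nat.digits q (∏ i, p i ^ n i)).card : ℝ) / (N : ℝ) ^ m)
      atTop (nhds 1) := by
  have hp : ∀ i, p i ≠ 0 := fun i => (hprime i).1.ne_zero
  have hfactors : ∀ r : ℕ, r.Prime → r ∣ q → ∃ i, p i = r := fun r hr hrq =>
    hcomplete r hr <| (Nat.le_of_dvd (by omega) hrq).lt_of_ne fun h => hnp (h ▸ hr)
  have hzero : ∀ n : Fin m → ℕ, (∀ i, q ≤ n i) → 0 ∈ q.digits (∏ i, p i ^ n i) := fun n hn =>
    Nat.zero_mem_digits_of_dvd hq (Finset.prod_ne_zero_iff.mpr fun i _ => pow_ne_zero _ (hp i))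
      (Nat.dvd_prod_pow_of_le (by omega) hp hfactors hn)
  simpa using tendsto_card_filter_piFinset_range_div_pow_of_forall_le _ hzero

/-- Let `q ≥ 2` be a non-prime integer and let `p_1 < p_2 < ... < p_m` be the
complete list of primes smaller than `q`.  Then the set of tuples
`(n_1, ..., n_m) ∈ ℕ^m` such that the base-`q` expansion of
`p_1^{n_1}···p_m^{n_m}` contains the digit `0` (i.e. `S_q` of the product is `0`)
has asymptotic density `1` in `ℕ^m`. -/
theorem density_zero_digit_prime_products (q m : ℕ) (hq : 2 ≤ q) (hnp : ¬ q.Prime)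
    (p : Fin m → ℕ) (hmono : StrictMono p)
    (hprime : ∀ i, (p i).Prime ∧ p i < q)
    (hcomplete : ∀ r : ℕ, r.Prime → r < q → ∃ i, p i = r) :
    Tendsto (fun N : ℕ =>
        (((Fintype.piFinset fun _ : Fin m => Finset.range N).filter fun n =>
            0 ∈ Nat.digits q (∏ i, p i ^ n i)).card : ℝ) / (N : ℝ) ^ m)
      atTop (nhds 1) :=
  density_zero_digit_prime_products_general q m hq hnp p hprime hcomplete
end

section
/- Let q ≥ 2 and let p_1, ..., p_k be integers with 1 < p_i < q for each i, such that the real numbers 1, log p_1/log q, ..., log p_k/log q are linearly independent over ℚ. If (n_1, ..., n_k) ∈ ℕ^k is such that the composition T_{p_1,q}^{n_1} ∘ T_{p_2,q}^{n_2} ∘ ... ∘ T_{p_k,q}^{n_k} fixes every point of [1/q, 1) (i.e., equals the identity there), then n_1 = n_2 = ... = n_k = 0. In particular, the abelian group generated by T_{p_1,q}, ..., T_{p_k,q} is free abelian of rank k. -/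
lemma Tmap_step {p q : ℕ} (hp1 : 1 < p) (hpq : p < q) {x : ℝ}
    (hx : x ∈ Set.Ico (1 / (q : ℝ)) 1) :
    Tmap p q x ∈ Set.Ico (1 / (q : ℝ)) 1 ∧
      ∃ m : ℤ, Real.log (Tmap p q x) = Real.log x + Real.log p - m * Real.log q := by
  have hq0 : (0 : ℝ) < q := by exact_mod_cast Nat.zero_lt_of_lt (hp1.trans hpq)
  have hp0 : (0 : ℝ) < p := by exact_mod_cast Nat.zero_lt_of_lt hp1
  have hpR1 : (1 : ℝ) < p := by exact_mod_cast hp1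
  have hpqR : (p : ℝ) < q := by exact_mod_cast hpq
  have hx0 : 0 < x := lt_of_lt_of_le (by positivity) hx.1
  rcases hx with ⟨hx1, hx2⟩
  unfold Tmap
  by_cases h : x < 1 / (p : ℝ)
  · rw [if_pos h]
    refine ⟨⟨?_, ?_⟩, 0, ?_⟩
    · calc 1 / (q : ℝ) ≤ x := hx1
        _ ≤ (p : ℝ) * x := le_mul_of_one_le_left hx0.le hpR1.le
    · have : (p : ℝ) * x < (p : ℝ) * (1 / p) := mul_lt_mul_of_pos_left h hp0
      have h2 : (p : ℝ) * (1 / p) = 1 := by field_simp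
      linarith
    · rw [Real.log_mul (ne_of_gt hp0) (ne_of_gt hx0)]; push_cast; ring
  · rw [if_neg h]
    push_neg at h
    refine ⟨⟨?_, ?_⟩, 1, ?_⟩
    · calc 1 / (q : ℝ) = (p : ℝ) / q * (1 / p) := by field_simp
        _ ≤ (p : ℝ) / q * x := mul_le_mul_of_nonneg_left h (by positivity)
    · have : (p : ℝ) / q * x < (p : ℝ) / q * 1 := mul_lt_mul_of_pos_left hx2 (by positivity)
      have h2 : (p : ℝ) / q < 1 := (div_lt_one hq0).mpr hpqR
      nlinarith
    · rw [Real.log_mul (by positivity) (ne_of_gt hx0),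
        Real.log_div (ne_of_gt hp0) (ne_of_gt hq0)]
      push_cast; ring

lemma Tmap_iter {p q : ℕ} (hp1 : 1 < p) (hpq : p < q) (N : ℕ) {x : ℝ}
    (hx : x ∈ Set.Ico (1 / (q : ℝ)) 1) :
    (Tmap p q)^[N] x ∈ Set.Ico (1 / (q : ℝ)) 1 ∧
      ∃ m : ℤ, Real.log ((Tmap p q)^[N] x) =
        Real.log x + N * Real.log p - m * Real.log q := by
  induction N with
  | zero => exact ⟨hx, 0, by simp⟩
  | succ N ih =>
    obtain ⟨hmem, m, hm⟩ := ih
    obtain ⟨hmem', m', hm'⟩ := Tmap_step hp1 hpq hmem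
    rw [Function.iterate_succ_apply'] at *
    exact ⟨hmem', m + m', by rw [hm', hm]; push_cast; ring⟩

lemma Tmap_fold (q : ℕ) : ∀ (k : ℕ) (p : Fin k → ℕ), (∀ i, 1 < p i ∧ p i < q) →
    ∀ (n : Fin k → ℕ) {x : ℝ}, x ∈ Set.Ico (1 / (q : ℝ)) 1 →
    (Fin.foldr k (fun i g => (Tmap (p i) q)^[n i] ∘ g) id x ∈ Set.Ico (1 / (q : ℝ)) 1 ∧
      ∃ m : ℤ, Real.log (Fin.foldr k (fun i g => (Tmap (p i) q)^[n i] ∘ g) id x) =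
        Real.log x + (∑ i, (n i : ℝ) * Real.log (p i)) - m * Real.log q) := by
  intro k
  induction k with
  | zero => intro p hp n x hx; simp only [Fin.foldr_zero, id_eq]; exact ⟨hx, 0, by simp⟩
  | succ k ih =>
    intro p hp n x hx
    rw [Fin.foldr_succ]
    obtain ⟨hmem, m, hm⟩ := ih (p ∘ Fin.succ) (fun i => hp i.succ) (n ∘ Fin.succ) hx
    obtain ⟨hmem', m', hm'⟩ := Tmap_iter (hp 0).1 (hp 0).2 (n 0) hmem
    refine ⟨hmem', m + m', ?_⟩
    simp only [Function.comp_apply] at *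
    rw [hm', hm, Fin.sum_univ_succ]
    push_cast; ring

/-- Let `q ≥ 2` and `1 < p_i < q` for `i = 1, ..., k`, with `1, log p_1/log q,
..., log p_k/log q` linearly independent over `ℚ`.  If the composition
`T_{p_1,q}^{n_1} ∘ ... ∘ T_{p_k,q}^{n_k}` fixes every point of `[1/q, 1)`, then
`n_1 = ... = n_k = 0`; in particular, the group generated by the `T_{p_i,q}` is
free abelian of rank `k`. -/
theorem Tmap_free_abelian (q k : ℕ) (hq : 2 ≤ q) (p : Fin k → ℕ)
    (hp : ∀ i, 1 < p i ∧ p i < q)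
    (hind : LinearIndependent ℚ
      (Fin.cons (1 : ℝ) (fun i : Fin k => Real.log (p i) / Real.log q)))
    (n : Fin k → ℕ)
    (hfix : ∀ x ∈ Set.Ico (1 / (q : ℝ)) 1,
      Fin.foldr k (fun i g => (Tmap (p i) q)^[n i] ∘ g) id x = x) :
    ∀ i, n i = 0 := by
  have hq1 : (1 : ℝ) < q := by exact_mod_cast hq
  have hq0 : (0 : ℝ) < q := lt_trans one_pos hq1
  have hlogq : 0 < Real.log q := Real.log_pos hq1
  have hxmem : (1 / (q : ℝ)) ∈ Set.Ico (1 / (q : ℝ)) 1 := by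
    constructor
    · exact le_rfl
    · exact (div_lt_one hq0).mpr hq1
  obtain ⟨_, m, hm⟩ := Tmap_fold q k p hp n hxmem
  rw [hfix _ hxmem] at hm
  have hsum : (∑ i, (n i : ℝ) * Real.log (p i)) = m * Real.log q := by linarith
  have hdiv : (∑ i, (n i : ℝ) * (Real.log (p i) / Real.log q)) = m := by
    have heq : (∑ i, (n i : ℝ) * (Real.log (p i) / Real.log q)) =
        (∑ i, (n i : ℝ) * Real.log (p i)) / Real.log q := by
      rw [Finset.sum_div]
      exact Finset.sum_congr rfl fun i _ => by ring
    rw [heq, hsum, mul_div_assoc, div_self hlogq.ne', mul_one]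
  set v : Fin (k + 1) → ℝ := Fin.cons (1 : ℝ) (fun i : Fin k => Real.log (p i) / Real.log q)
    with hv
  set c : Fin (k + 1) → ℚ := Fin.cons (-(m : ℚ)) (fun i => (n i : ℚ)) with hc
  have hcomb : ∑ j : Fin (k + 1), c j • v j = 0 := by
    rw [Fin.sum_univ_succ]
    simp only [hv, hc, Fin.cons_zero, Fin.cons_succ, Rat.smul_def]
    push_cast
    rw [← hdiv]
    ring
  have := Fintype.linearIndependent_iff.mp hind c hcomb
  intro i
  have hi := this i.succ
  simp only [hc, Fin.cons_succ] at hi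
  exact_mod_cast hi
end

section
/- Fix k ≥ 1, a digit x ∈ {0,1,2}, a carryover c ∈ {0,1}, and let y be either (2x) mod 3 or (2x+1) mod 3. Then the number of k-blocks B ∈ {0,1,2}^k with B ≠ (1,1,...,1) and Φ_k(x, B, c) = y is exactly (3^k − 1)/2. -/
/-- The value `v(B) = Σ_{j=1}^k x_j·3^(k-j)` of a `k`-block `B ∈ {0,1,2}^k`. -/
def blockVal {k : ℕ} (B : Fin k → Fin 3) : ℕ :=
  ∑ j : Fin k, (B j : ℕ) * 3 ^ (k - 1 - (j : ℕ))

/-- `Φ_k(x, B, c) = (2x + ⌊(2·v(B) + c)/3^k⌋) mod 3`: the digit produced below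
`x` when the base-3 number with leading digit `x` followed by the block `B` is
doubled, the carryover arriving from the right of `B` being `c`. -/
def Phi {k : ℕ} (x : Fin 3) (B : Fin k → Fin 3) (c : Fin 2) : ℕ :=
  (2 * (x : ℕ) + (2 * blockVal B + (c : ℕ)) / 3 ^ k) % 3


lemma blockVal_eq {k : ℕ} (B : Fin k → Fin 3) :
    blockVal B = (finFunctionFinEquiv (B ∘ Fin.rev) : ℕ) := by
  rw [finFunctionFinEquiv_apply, blockVal]
  refine Fintype.sum_equiv Fin.revPerm _ _ (fun i => ?_)
  simp only [Fin.revPerm_apply, Function.comp_apply, Fin.rev_rev, Fin.val_rev]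
  congr 2
  omega

lemma blockVal_lt {k : ℕ} (B : Fin k → Fin 3) : blockVal B < 3 ^ k := by
  rw [blockVal_eq]; exact (finFunctionFinEquiv (B ∘ Fin.rev)).isLt

lemma blockVal_inj {k : ℕ} {B B' : Fin k → Fin 3} (h : blockVal B = blockVal B') :
    B = B' := by
  rw [blockVal_eq, blockVal_eq] at h
  have := finFunctionFinEquiv.injective (Fin.val_injective h)
  funext j
  have := congrFun this (Fin.rev j)
  simpa using this

lemma blockVal_ones {k : ℕ} : blockVal (fun _ : Fin k => (1 : Fin 3)) = (3 ^ k - 1) / 2 := by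
  rw [blockVal_eq]
  rw [finFunctionFinEquiv_apply]
  simp only [Function.comp_apply, Fin.val_one]
  rw [Fin.sum_univ_eq_sum_range (fun i => 1 * 3 ^ i)]
  simp only [one_mul]
  exact Nat.geomSum_eq (by norm_num) k

/-- For `k ≥ 1`, a digit `x ∈ {0,1,2}`, a carryover `c ∈ {0,1}` and
`y ∈ {2x mod 3, (2x+1) mod 3}`, the number of `k`-blocks `B ≠ (1,...,1)` with
`Φ_k(x, B, c) = y` is exactly `(3^k - 1)/2`. -/
theorem card_blocks_with_transition (k : ℕ) (hk : 1 ≤ k) (x : Fin 3) (c : Fin 2)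
    (y : ℕ) (hy : y = 2 * (x : ℕ) % 3 ∨ y = (2 * (x : ℕ) + 1) % 3) :
    ((Finset.univ.filter fun B : Fin k → Fin 3 =>
        B ≠ (fun _ => 1) ∧ Phi x B c = y).card) = (3 ^ k - 1) / 2 := by
  obtain ⟨t, ht⟩ : Odd (3 ^ k) := Odd.pow (by decide)
  set N := 3 ^ k with hN
  have hM : (3 ^ k - 1) / 2 = t := by omega
  have hblt : ∀ B : Fin k → Fin 3, blockVal B < N := blockVal_lt
  -- bijection onto a filter of range N
  have key : ((Finset.univ.filter fun B : Fin k → Fin 3 =>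
        B ≠ (fun _ => 1) ∧ Phi x B c = y).card) =
      ((Finset.range N).filter fun v =>
        v ≠ t ∧ (2 * (x : ℕ) + (2 * v + (c : ℕ)) / N) % 3 = y).card := by
    refine Finset.card_bij (fun B _ => blockVal B) ?_ ?_ ?_
    · intro B hB
      simp only [Finset.mem_filter, Finset.mem_univ, true_and] at hB ⊢
      refine ⟨Finset.mem_range.2 (hblt B), ?_, hB.2⟩
      intro hv
      exact hB.1 (blockVal_inj (by rw [hv, blockVal_ones, hM]))
    · intro B₁ _ B₂ _ h
      exact blockVal_inj h
    · intro v hv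
      simp only [Finset.mem_filter, Finset.mem_range] at hv
      set B := finFunctionFinEquiv.symm (⟨v, hv.1⟩ : Fin N) ∘ Fin.rev with hB
      have hbv : blockVal B = v := by
        rw [blockVal_eq]
        have : B ∘ Fin.rev = finFunctionFinEquiv.symm (⟨v, hv.1⟩ : Fin N) := by
          funext i; simp [hB, Fin.rev_rev]
        rw [this, Equiv.apply_symm_apply]
      refine ⟨B, ?_, hbv⟩
      simp only [Finset.mem_filter, Finset.mem_univ, true_and]
      constructor
      · intro h
        apply hv.2.1
        rw [← hbv, h, blockVal_ones, hM]
      · rw [Phi, hbv]; exact hv.2.2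
  rw [key, hM]
  -- now pure arithmetic counting
  have hNt : N = 2 * t + 1 := ht
  have hx3 : (x : ℕ) < 3 := x.isLt
  have hc2 : (c : ℕ) < 2 := c.isLt
  have hA : 2 * (x:ℕ) % 3 ≠ (2 * (x:ℕ) + 1) % 3 := by omega
  have hfloor : ∀ v < N, v ≠ t →
      (2 * v + (c:ℕ)) / N = if v < t then 0 else 1 := by
    intro v hvN hvt
    split
    · next h => exact Nat.div_eq_of_lt (by omega)
    · next h =>
      have h1 : N ≤ 2 * v + (c:ℕ) → 2 * v + (c:ℕ) < 2 * N → (2 * v + (c:ℕ)) / N = 1 := by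
        intro h2 h3
        rw [Nat.div_eq_sub_div (by omega) h2, Nat.div_eq_of_lt (by omega)]
      exact h1 (by omega) (by omega)
  rcases hy with hy | hy
  · have : (Finset.range N).filter (fun v =>
        v ≠ t ∧ (2 * (x : ℕ) + (2 * v + (c : ℕ)) / N) % 3 = y) = Finset.range t := by
      ext v
      simp only [Finset.mem_filter, Finset.mem_range]
      constructor
      · rintro ⟨hvN, hvt, hmod⟩
        by_contra h
        rw [hfloor v hvN hvt] at hmod
        rw [if_neg (by omega)] at hmod
        rw [hy] at hmod
        omega
      · intro h
        refine ⟨by omega, by omega, ?_⟩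
        rw [hfloor v (by omega) (by omega), if_pos h, hy]
        omega
    rw [this, Finset.card_range]
  · have : (Finset.range N).filter (fun v =>
        v ≠ t ∧ (2 * (x : ℕ) + (2 * v + (c : ℕ)) / N) % 3 = y) = Finset.Ico (t+1) N := by
      ext v
      simp only [Finset.mem_filter, Finset.mem_range, Finset.mem_Ico]
      constructor
      · rintro ⟨hvN, hvt, hmod⟩
        refine ⟨?_, hvN⟩
        by_contra h
        rw [hfloor v hvN hvt, if_pos (by omega), hy] at hmod
        omega
      · intro h
        refine ⟨by omega, by omega, ?_⟩
        rw [hfloor v (by omega) (by omega), if_neg (by omega), hy]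
    rw [this, Nat.card_Ico]
    omega
end
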